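/- arXiv:1401.0849 — 2 statements merged into one kernel-verified Lean document; each statement's English description precedes it below -/
import Mathlib

section
/- Let Ω = {β_1,…,β_{−1}} be a maximal square in a simply-laced root system Φ with roots of length 1, and let ρ ∈ Φ. If (ρ,β_i) = (ρ,β_{−i}) = −1/2 for some i, then −ρ ∈ Ω. -/
open scoped RealInnerProductSpace

/-- A simply-laced root system in a real inner product space,
normalized so that all roots have squared length `1`. -/
structure SimplyLacedRootSystem (E : Type*) [NormedAddCommGroup E]
    [InnerProductSpace ℝ E] : Type _ where
  Φ : Set E
  finite : Φ.Finite
  zero_not_mem : (0 : E) ∉ Φ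
  neg_mem : ∀ α ∈ Φ, -α ∈ Φ
  norm_one : ∀ α ∈ Φ, ⟪α, α⟫ = 1
  crystallographic : ∀ α ∈ Φ, ∀ β ∈ Φ, ∃ n : ℤ, 2 * ⟪α, β⟫ = (n : ℝ)
  reflect_mem : ∀ α ∈ Φ, ∀ β ∈ Φ, α - (2 * ⟪α, β⟫) • β ∈ Φ
  reduced : ∀ α ∈ Φ, ∀ t : ℝ, t • α ∈ Φ → t = 1 ∨ t = -1

/-- A maximal square in `Φ`: a family of roots `β_{±1},…,β_{±k}` (here indexed by
`Fin k × Bool`, the pair `(i, true)`/`(i, false)` playing the role of `β_{i}, β_{-i}`)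
with `(β_i, β_{-i}) = 0` and `(β_i, β_j) = 1/2` for `i ≠ ±j`, which is moreover
maximal: every pair of roots summing to `β_i + β_{-i}` already lies in the square. -/
def IsMaximalSquare {E : Type*} [NormedAddCommGroup E] [InnerProductSpace ℝ E]
    (Φ : Set E) (k : ℕ) (β : Fin k → Bool → E) : Prop :=
  (∀ i b, β i b ∈ Φ) ∧ (∀ i, ⟪β i true, β i false⟫ = 0) ∧
  (∀ i j, i ≠ j → ∀ b c, ⟪β i b, β j c⟫ = 1 / 2) ∧
  (∀ γ ∈ Φ, ∀ δ ∈ Φ, ∀ i, γ + δ = β i true + β i false → ∃ j b, γ = β j b)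

/-- If `Ω = {β_{±1},…,β_{±k}}` is a maximal square and `ρ ∈ Φ` satisfies
`(ρ,β_i) = (ρ,β_{-i}) = -1/2` for some `i`, then `-ρ ∈ Ω`. -/
theorem neg_mem_square_of_inner_neg_half {E : Type*} [NormedAddCommGroup E]
    [InnerProductSpace ℝ E] (S : SimplyLacedRootSystem E)
    (k : ℕ) (β : Fin k → Bool → E) (hβ : IsMaximalSquare S.Φ k β)
    {ρ : E} (hρ : ρ ∈ S.Φ) (i : Fin k)
    (h1 : ⟪ρ, β i true⟫ = -(1 / 2)) (h2 : ⟪ρ, β i false⟫ = -(1 / 2)) :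
    ∃ j b, -ρ = β j b := by
  obtain ⟨hmem, horth, hhalf, hmax⟩ := hβ
  have hA : ρ + β i true ∈ S.Φ := by
    have h := S.reflect_mem ρ hρ (β i true) (hmem i true)
    rw [h1] at h
    norm_num at h
    simpa [sub_neg_eq_add] using h
  have hAB : ⟪ρ + β i true, β i false⟫ = -(1 / 2) := by
    rw [inner_add_left, h2, horth i]; ring
  have hC : ρ + β i true + β i false ∈ S.Φ := by
    have h := S.reflect_mem _ hA (β i false) (hmem i false)
    rw [hAB] at h
    norm_num at h
    simpa [sub_neg_eq_add] using h
  exact hmax (-ρ) (S.neg_mem ρ hρ) (ρ + β i true + β i false) hC i (by abel)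
end

section
/- Let Φ be a simply-laced root system with roots of length 1, let α ⊥ β ∈ Φ, and let Ω = {β_1,…,β_{−1}} be a maximal square with β_1 = α, β_{−1} = β, and β_i ⊥ β_{−i} for all i. Then the set S_{2π/3}(α,β) = {{γ,δ} : γ,δ ∈ Φ, γ+δ = α, (γ,β) ≠ 0} equals {{β_1 − β_i, β_i} : i = ±2,…,±k, i ≠ ±1}. -/
open scoped RealInnerProductSpace

/-- Description of the set `S_{2π/3}(α,β)` of unordered pairs `{γ,δ}` of roots
with `γ + δ = α` and `(γ,β) ≠ 0`, for `α ⊥ β` extended to a maximal square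
`{B_{±1},…,B_{±k}}` with `B_1 = α`, `B_{-1} = β` (the index `1` being `i₁`):
it consists exactly of the pairs `{α − B_i, B_i}` for `i ≠ ±1`. -/
theorem S_two_pi_thirds_description {E : Type*} [NormedAddCommGroup E]
    [InnerProductSpace ℝ E] (S : SimplyLacedRootSystem E)
    (k : ℕ) (B : Fin k → Bool → E) (hB : IsMaximalSquare S.Φ k B)
    {α β : E} (i₁ : Fin k) (hα : B i₁ true = α) (hβ : B i₁ false = β)
    (hperp : ⟪α, β⟫ = 0) :
    {p : Set E | ∃ γ δ, γ ∈ S.Φ ∧ δ ∈ S.Φ ∧ γ + δ = α ∧ ⟪γ, β⟫ ≠ 0 ∧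
        p = {γ, δ}} =
      {p : Set E | ∃ i b, i ≠ i₁ ∧ p = {α - B i b, B i b}} := by

  obtain ⟨hmem, hperp0, hhalf, hmax⟩ := hB
  have hαΦ : α ∈ S.Φ := hα ▸ hmem i₁ true
  have hβΦ : β ∈ S.Φ := hβ ▸ hmem i₁ false
  have hαα : ⟪α, α⟫ = 1 := S.norm_one α hαΦ
  have hββ : ⟪β, β⟫ = 1 := S.norm_one β hβΦ
  have key : ∀ γ δ, γ ∈ S.Φ → δ ∈ S.Φ → γ + δ = α → ⟪γ, β⟫ = -(1/2) →
      ∃ i b, i ≠ i₁ ∧ γ = α - B i b ∧ δ = B i b := by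
    intro γ δ hγ hδ hsum hγβ
    have hδβ : ⟪δ, β⟫ = 1/2 := by
      have h1 : ⟪γ + δ, β⟫ = ⟪α, β⟫ := by rw [hsum]
      rw [inner_add_left] at h1
      linarith
    have hγβΦ : γ + β ∈ S.Φ := by
      have h := S.reflect_mem γ hγ β hβΦ
      rw [hγβ] at h
      have he : γ - (2 * -(1/2 : ℝ)) • β = γ + β := by
        norm_num
      rwa [he] at h
    have hsum2 : δ + (γ + β) = B i₁ true + B i₁ false := by
      rw [hα, hβ, ← hsum]; abel
    obtain ⟨j, b, hjb⟩ := hmax δ hδ (γ + β) hγβΦ i₁ hsum2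
    refine ⟨j, b, ?_, by rw [← hjb, ← hsum]; abel, hjb⟩
    rintro rfl
    cases b with
    | true =>
      rw [hjb, hα, hperp] at hδβ
      norm_num at hδβ
    | false =>
      rw [hjb, hβ, hββ] at hδβ
      norm_num at hδβ
  ext p
  simp only [Set.mem_setOf_eq]
  constructor
  · rintro ⟨γ, δ, hγ, hδ, hsum, hne, rfl⟩
    have hγγ : ⟪γ, γ⟫ = 1 := S.norm_one γ hγ
    have hδδ : ⟪δ, δ⟫ = 1 := S.norm_one δ hδ
    obtain ⟨n, hn⟩ := S.crystallographic γ hγ β hβΦ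
    have hγn : ‖γ‖ = 1 := by
      have h := real_inner_self_eq_norm_sq γ
      nlinarith [norm_nonneg γ]
    have hβn : ‖β‖ = 1 := by
      have h := real_inner_self_eq_norm_sq β
      nlinarith [norm_nonneg β]
    have hcs : |⟪γ, β⟫| ≤ 1 := by
      have h := abs_real_inner_le_norm γ β
      rw [hγn, hβn] at h; linarith
    have hnr : |(n : ℝ)| ≤ 2 := by
      rw [← hn, abs_mul, abs_of_nonneg (by norm_num : (0:ℝ) ≤ 2)]
      linarith
    have hnz : n ≠ 0 := by
      rintro rfl
      apply hne
      push_cast at hn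
      linarith
    have hn2 : |n| ≤ 2 := by
      have h2 : ((|n| : ℤ) : ℝ) ≤ ((2 : ℤ) : ℝ) := by push_cast; exact hnr
      exact_mod_cast h2
    have hn2' : -2 ≤ n ∧ n ≤ 2 := abs_le.mp hn2
    have hcases : n = -2 ∨ n = -1 ∨ n = 1 ∨ n = 2 := by omega
    have hval : ⟪γ, β⟫ = -(1/2) ∨ ⟪γ, β⟫ = 1/2 := by
      rcases hcases with h | h | h | h
      · exfalso
        have h1 : ⟪γ, β⟫ = -1 := by rw [h] at hn; push_cast at hn; linarith
        have hc : ⟪β, γ⟫ = -1 := by rw [real_inner_comm]; exact h1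
        have hz0 : ⟪γ + β, γ + β⟫ = 0 := by
          rw [inner_add_left, inner_add_right, inner_add_right, hγγ, hββ, h1, hc]
          ring
        have hz : γ + β = 0 := by rwa [inner_self_eq_zero] at hz0
        have hγ' : γ = -β := eq_neg_of_add_eq_zero_left hz
        have hδ' : δ = α + β := by
          have hd : δ = α - γ := by rw [← hsum]; abel
          rw [hd, hγ', sub_neg_eq_add]
        have hc2 : ⟪β, α⟫ = 0 := by rw [real_inner_comm]; exact hperp
        rw [hδ', inner_add_left, inner_add_right, inner_add_right,
          hαα, hββ, hperp, hc2] at hδδ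
        norm_num at hδδ
      · left; rw [h] at hn; push_cast at hn; linarith
      · right; rw [h] at hn; push_cast at hn; linarith
      · exfalso
        have h1 : ⟪γ, β⟫ = 1 := by rw [h] at hn; push_cast at hn; linarith
        have hc : ⟪β, γ⟫ = 1 := by rw [real_inner_comm]; exact h1
        have hz0 : ⟪γ - β, γ - β⟫ = 0 := by
          rw [inner_sub_left, inner_sub_right, inner_sub_right, hγγ, hββ, h1, hc]
          ring
        have hz : γ - β = 0 := by rwa [inner_self_eq_zero] at hz0
        have hγ' : γ = β := by rwa [sub_eq_zero] at hz
        have hδ' : δ = α - β := by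
          have hd : δ = α - γ := by rw [← hsum]; abel
          rw [hd, hγ']
        have hc2 : ⟪β, α⟫ = 0 := by rw [real_inner_comm]; exact hperp
        rw [hδ', inner_sub_left, inner_sub_right, inner_sub_right,
          hαα, hββ, hperp, hc2] at hδδ
        norm_num at hδδ
    rcases hval with hv | hv
    · obtain ⟨i, b, hi, h1, h2⟩ := key γ δ hγ hδ hsum hv
      exact ⟨i, b, hi, by rw [h1, h2]⟩
    · have hδβ : ⟪δ, β⟫ = -(1/2) := by
        have h1 : ⟪γ + δ, β⟫ = ⟪α, β⟫ := by rw [hsum]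
        rw [inner_add_left] at h1
        linarith
      obtain ⟨i, b, hi, h1, h2⟩ := key δ γ hδ hγ (by rw [add_comm]; exact hsum) hδβ
      refine ⟨i, b, hi, ?_⟩
      rw [h1, h2]
      exact Set.pair_comm _ _
  · rintro ⟨i, b, hi, rfl⟩
    have hin : ⟪α, B i b⟫ = 1/2 := by
      rw [← hα]; exact hhalf i₁ i (fun h => hi h.symm) true b
    have hroot : α - B i b ∈ S.Φ := by
      have h := S.reflect_mem α hαΦ (B i b) (hmem i b)
      rw [hin] at h
      have he : α - (2 * (1/2 : ℝ)) • B i b = α - B i b := by norm_num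
      rwa [he] at h
    refine ⟨α - B i b, B i b, hroot, hmem i b, by abel, ?_, rfl⟩
    have hbb : ⟪B i b, β⟫ = 1/2 := by
      rw [← hβ, real_inner_comm]; exact hhalf i₁ i (fun h => hi h.symm) false b
    rw [inner_sub_left, hperp, hbb]
    norm_num
end
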